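/- If M is a finitely generated Gorenstein projective module over an Artinian algebra with a minimal projective resolution, then the Auslander transpose Tr M is isomorphic to (Ω² M)* = Hom_Λ(Ω² M, Λ). -/

import Mathlib

/-!
Let `P₁ →g P₀ →f M → 0` be the minimal projective presentation defining `Tr M = coker g*`.
Uniqueness of projective covers identifies `Ω M` with `range g` and `Ω² M` with `ker g`.
Computing `Ext` on a projective resolution that begins with `P₁ → P₀`, the vanishing of
`Ext¹(M, Λ)` says that every map `range g → Λ` extends to `P₀`, and the vanishing of
`Ext²(M, Λ)` says that every map `ker g → Λ` extends to `P₁`. Hence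
`P₀* → P₁* → (ker g)* → 0` is exact, i.e. `Tr M ≅ (ker g)* ≅ (Ω² M)*`.
-/

open CategoryTheory

noncomputable section

/-- The Ext group `Ext^i_R(M,N)` (ℤ-linear Ext in `ModuleCat R`). -/
def ExtGrp (R : Type) [Ring R] (M N : Type) [AddCommGroup M] [Module R M]
    [AddCommGroup N] [Module R N] (i : ℕ) : Type :=
  ((Ext ℤ (ModuleCat R) i).obj (Opposite.op (ModuleCat.of R M))).obj (ModuleCat.of R N)

instance (R : Type) [Ring R] (M N : Type) [AddCommGroup M] [Module R M]
    [AddCommGroup N] [Module R N] (i : ℕ) : AddCommGroup (ExtGrp R M N i) :=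
  inferInstanceAs (AddCommGroup (((Ext ℤ (ModuleCat R) i).obj
    (Opposite.op (ModuleCat.of R M))).obj (ModuleCat.of R N)))

/-- `Ext^i_R(M,N)` vanishes. -/
def extVanish (R : Type) [Ring R] (M N : Type) [AddCommGroup M] [Module R M]
    [AddCommGroup N] [Module R N] (i : ℕ) : Prop :=
  Subsingleton (ExtGrp R M N i)

/-- `M` is self-orthogonal: `Ext^i(M,M) = 0` for all `i ≥ 1`. -/
def SelfOrth (R : Type) [Ring R] (M : Type) [AddCommGroup M] [Module R M] : Prop :=
  ∀ i : ℕ, 1 ≤ i → extVanish R M M i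

/-- `f : P → M` is a projective cover: `P` projective, `f` surjective with superfluous kernel. -/
def IsProjCover (R : Type) [Ring R] {P M : Type} [AddCommGroup P] [Module R P]
    [AddCommGroup M] [Module R M] (f : P →ₗ[R] M) : Prop :=
  Module.Projective R P ∧ Function.Surjective f ∧
    ∀ N : Submodule R P, N ⊔ LinearMap.ker f = ⊤ → N = ⊤

/-- `K` is (isomorphic to) the first syzygy `Ω M` of a minimal projective resolution of `M`. -/
def IsSyzygyOf (R : Type) [Ring R] (K M : Type) [AddCommGroup K] [Module R K]
    [AddCommGroup M] [Module R M] : Prop :=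
  ∃ (P : Type) (_ : AddCommGroup P) (_ : Module R P) (f : P →ₗ[R] M),
    IsProjCover R f ∧ Nonempty (K ≃ₗ[R] LinearMap.ker f)

/-- `K` is (isomorphic to) the `n`-th syzygy `Ω^n M` of a minimal projective resolution. -/
def IsNthSyzygyOf (R : Type) [Ring R] : ℕ → (K M : Type) → [AddCommGroup K] → [Module R K] →
    [AddCommGroup M] → [Module R M] → Prop
  | 0, K, M, _, _, _, _ => Nonempty (K ≃ₗ[R] M)
  | n + 1, K, M, _, _, _, _ =>
      ∃ (K' : Type) (_ : AddCommGroup K') (_ : Module R K'), IsSyzygyOf R K' M ∧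
        IsNthSyzygyOf R n K K'

/-- The map on duals `Hom(N,R) → Hom(M,R)` (a map of right `R`-modules) induced by `f`. -/
def dualMapOp (R : Type) [Ring R] {M N : Type} [AddCommGroup M] [Module R M]
    [AddCommGroup N] [Module R N] (f : M →ₗ[R] N) :
    (N →ₗ[R] R) →ₗ[Rᵐᵒᵖ] (M →ₗ[R] R) where
  toFun g := g.comp f
  map_add' g h := by ext; simp
  map_smul' a g := by ext; simp

/-- `T` is (isomorphic to) the Auslander transpose of `M`, i.e. the cokernel of
`Hom(P₀,R) → Hom(P₁,R)` for a minimal projective presentation `P₁ → P₀ → M → 0`. -/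
def IsTransposeOf (R : Type) [Ring R] (T M : Type) [AddCommGroup T] [Module Rᵐᵒᵖ T]
    [AddCommGroup M] [Module R M] : Prop :=
  ∃ (P₁ P₀ : Type) (_ : AddCommGroup P₁) (_ : Module R P₁) (_ : AddCommGroup P₀)
    (_ : Module R P₀) (g : P₁ →ₗ[R] P₀) (f : P₀ →ₗ[R] M),
      IsProjCover R f ∧ Module.Projective R P₁ ∧
      LinearMap.range g = LinearMap.ker f ∧
      (∀ N : Submodule R P₁, N ⊔ LinearMap.ker g = ⊤ → N = ⊤) ∧
      Nonempty (T ≃ₗ[Rᵐᵒᵖ] ((P₁ →ₗ[R] R) ⧸ LinearMap.range (dualMapOp R g)))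

/-- `M` is Gorenstein projective: `Ext^i(M,R) = 0` and `Ext^i(Tr M, R) = 0` for all `i ≥ 1`. -/
def GProj (R : Type) [Ring R] (M : Type) [AddCommGroup M] [Module R M] : Prop :=
  (∀ i : ℕ, 1 ≤ i → extVanish R M R i) ∧
  (∀ (T : Type) (_ : AddCommGroup T) (_ : Module Rᵐᵒᵖ T), IsTransposeOf R T M →
    ∀ i : ℕ, 1 ≤ i → extVanish Rᵐᵒᵖ T Rᵐᵒᵖ i)

/-- `f` factors through a projective module. -/
def FactorsThroughProj (R : Type) [Ring R] {M N : Type} [AddCommGroup M] [Module R M]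
    [AddCommGroup N] [Module R N] (f : M →ₗ[R] N) : Prop :=
  ∃ (P : Type) (_ : AddCommGroup P) (_ : Module R P) (_ : Module.Projective R P)
    (g : M →ₗ[R] P) (h : P →ₗ[R] N), f = h.comp g

/-- The subgroup of `Hom(M,N)` of morphisms factoring through a projective. -/
def projFactorSub (R : Type) [Ring R] (M N : Type) [AddCommGroup M] [Module R M]
    [AddCommGroup N] [Module R N] : AddSubgroup (M →ₗ[R] N) :=
  AddSubgroup.closure {f | FactorsThroughProj R f}

/-- The stable Hom group `Hom̲(M,N) = Hom(M,N)` modulo maps factoring through projectives. -/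
def StableHom (R : Type) [Ring R] (M N : Type) [AddCommGroup M] [Module R M]
    [AddCommGroup N] [Module R N] :=
  (M →ₗ[R] N) ⧸ projFactorSub R M N

instance (R : Type) [Ring R] (M N : Type) [AddCommGroup M] [Module R M]
    [AddCommGroup N] [Module R N] : AddCommGroup (StableHom R M N) :=
  QuotientAddGroup.Quotient.addCommGroup _

/-- `M` and `N` are isomorphic in the stable category: `M ⊕ P ≅ N ⊕ Q` with `P,Q` projective. -/
def StablyIso (R : Type) [Ring R] (M N : Type) [AddCommGroup M] [Module R M]
    [AddCommGroup N] [Module R N] : Prop :=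
  ∃ (P Q : Type) (_ : AddCommGroup P) (_ : Module R P) (_ : AddCommGroup Q) (_ : Module R Q),
    Module.Projective R P ∧ Module.Projective R Q ∧ Nonempty ((M × P) ≃ₗ[R] (N × Q))

/-- `M` is an indecomposable (nonzero) module. -/
def Indec (R : Type) [Ring R] (M : Type) [AddCommGroup M] [Module R M] : Prop :=
  Nontrivial M ∧ ∀ N₁ N₂ : Submodule R M, IsCompl N₁ N₂ → N₁ = ⊥ ∨ N₂ = ⊥

/-- `R` is CM-finite: finitely many iso classes of f.g. indecomposable Gorenstein projectives. -/
def CMFinite (R : Type) [Ring R] : Prop :=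
  ∃ L : List (ModuleCat.{0} R), ∀ (M : Type) (_ : AddCommGroup M) (_ : Module R M),
    Module.Finite R M → Indec R M → GProj R M → ∃ N ∈ L, Nonempty (M ≃ₗ[R] N)

/-- `R` satisfies the Gorenstein projective conjecture. -/
def GPConj (R : Type) [Ring R] : Prop :=
  ∀ (M : Type) (_ : AddCommGroup M) (_ : Module R M), Module.Finite R M →
    GProj R M → SelfOrth R M → Module.Projective R M


namespace CategoryTheory.ProjectiveResolution

open Limits

variable {C : Type*} [Category C] [Abelian C]

theorem exists_d_comp_eq_of_isZero_ext [Linear ℤ C] [EnoughProjectives C] {X Y : C}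
    (Q : ProjectiveResolution X) (n : ℕ)
    (hext : IsZero (((Ext ℤ C (n + 1)).obj (Opposite.op X)).obj Y))
    (ψ : Q.complex.X (n + 1) ⟶ Y) (hψ : Q.complex.d (n + 2) (n + 1) ≫ ψ = 0) :
    ∃ η : Q.complex.X n ⟶ Y, Q.complex.d (n + 1) n ≫ η = ψ := by
  have hexact : (Q.complex.linearYonedaObj ℤ Y).ExactAt (n + 1) :=
    (HomologicalComplex.exactAt_iff_isZero_homology _ _).2 (hext.of_iso (Q.isoExt (n + 1) Y).symm)
  rw [HomologicalComplex.exactAt_iff' _ n (n + 1) (n + 2) (by simp) (by simp),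
    ShortComplex.moduleCat_exact_iff] at hexact
  exact hexact ψ hψ

section Presentation

variable [EnoughProjectives C] {P₀ P₁ : C} (g : P₁ ⟶ P₀)

def ofPresentationComplex : ChainComplex C ℕ :=
  ChainComplex.mk' P₀ P₁ g fun f =>
    ⟨_, Projective.d f, (Category.assoc _ _ _).trans (by rw [kernel.condition]; exact comp_zero)⟩

@[simp]
lemma ofPresentationComplex_d_1_0 : (ofPresentationComplex g).d 1 0 = g := by
  simp [ofPresentationComplex]

lemma ofPresentationComplex_exactAt_succ (n : ℕ) : (ofPresentationComplex g).ExactAt (n + 1) := by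
  rw [HomologicalComplex.exactAt_iff' _ (n + 1 + 1) (n + 1) n (by simp) (by simp)]
  let e : (ofPresentationComplex g).X (n + 2) ≅
      Projective.syzygies ((ofPresentationComplex g).d (n + 1) n) :=
    ChainComplex.mk'XIso _ _ _ _ n
  refine (ShortComplex.exact_iff_of_iso ?_).2 (exact_d_f ((ofPresentationComplex g).d (n + 1) n))
  exact ShortComplex.isoMk e (Iso.refl _) (Iso.refl _)
    ((ChainComplex.mk'_d _ _ _ _ n).symm.trans (Category.comp_id _).symm)
    ((Category.id_comp _).trans (Category.comp_id _).symm)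

instance [Projective P₀] [Projective P₁] (n : ℕ) :
    Projective ((ofPresentationComplex g).X n) := by
  obtain (_ | _ | _ | n) := n
  · exact ‹Projective P₀›
  · exact ‹Projective P₁›
  all_goals apply Projective.projective_over

/-- Its terms in degrees `0` and `1` are `P₀` and `P₁` definitionally. -/
def ofPresentation [Projective P₀] [Projective P₁] {X : C} (p : P₀ ⟶ X) [Epi p]
    (w : g ≫ p = 0) (hex : (ShortComplex.mk g p w).Exact) : ProjectiveResolution X where
  complex := ofPresentationComplex g
  π := (ChainComplex.toSingle₀Equiv _ _).symm ⟨p, by rw [ofPresentationComplex_d_1_0]; exact w⟩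
  quasiIso := ⟨fun n => by
    cases n with
    | zero =>
      rw [ChainComplex.quasiIsoAt₀_iff, ShortComplex.quasiIso_iff_of_zeros']
      · refine (ShortComplex.exact_and_epi_g_iff_of_iso ?_).2 ⟨hex, ‹Epi p›⟩
        exact ShortComplex.isoMk (Iso.refl _) (Iso.refl _) (Iso.refl _)
          ((Category.id_comp _).trans
            ((Category.comp_id _).trans (ofPresentationComplex_d_1_0 g)).symm)
          ((Category.id_comp _).trans ((Category.comp_id _).trans
            (ChainComplex.toSingle₀Equiv_symm_apply_f_zero
              (C := ofPresentationComplex g) p _)).symm)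
      all_goals rfl
    | succ n =>
      rw [quasiIsoAt_iff_exactAt' _ _ (ChainComplex.exactAt_succ_single_obj _ _)]
      exact ofPresentationComplex_exactAt_succ g n⟩

end Presentation

universe u

variable {R : Type u} [Ring R]

theorem exists_comp_subtype_eq_of_isZero_ext {X Y : ModuleCat.{u} R} (Q : ProjectiveResolution X)
    (n : ℕ) (hext : Limits.IsZero (((Ext ℤ (ModuleCat R) (n + 1)).obj (Opposite.op X)).obj Y))
    {S : Submodule R (Q.complex.X n)} (hS : LinearMap.range (Q.complex.d (n + 1) n).hom = S)
    (φ : S →ₗ[R] Y) : ∃ η : Q.complex.X n →ₗ[R] Y, η ∘ₗ S.subtype = φ := by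
  subst hS
  obtain ⟨η, hη⟩ := exists_d_comp_eq_of_isZero_ext Q n hext
    (ModuleCat.ofHom (φ ∘ₗ (Q.complex.d (n + 1) n).hom.rangeRestrict)) (by
      ext x
      have hdd : (Q.complex.d (n + 1) n).hom.rangeRestrict (Q.complex.d (n + 2) (n + 1) x) = 0 :=
        Subtype.ext congr($(Q.complex.d_comp_d (n + 2) (n + 1) n) x)
      simp [hdd])
  refine ⟨η.hom, ?_⟩
  ext ⟨_, x, rfl⟩
  exact congr($hη x)

end CategoryTheory.ProjectiveResolution

section Presentation

open CategoryTheory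

variable {R : Type} [Ring R] {M N P₀ P₁ : Type} [AddCommGroup M] [Module R M]
  [AddCommGroup N] [Module R N] [AddCommGroup P₀] [Module R P₀] [AddCommGroup P₁] [Module R P₁]
  [Module.Projective R P₀] [Module.Projective R P₁]
  {p : P₀ →ₗ[R] M} {g : P₁ →ₗ[R] P₀}

theorem extVanish.isZero {i : ℕ} (h : extVanish R M N i) :
    Limits.IsZero (((Ext ℤ (ModuleCat R) i).obj (Opposite.op (ModuleCat.of R M))).obj
      (ModuleCat.of R N)) :=
  @ModuleCat.isZero_of_subsingleton _ _ _ h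

def ModuleCat.projectiveResolutionOfPresentation (hp : Function.Surjective p)
    (hgp : LinearMap.range g = LinearMap.ker p) : ProjectiveResolution (ModuleCat.of R M) :=
  haveI : Epi (ModuleCat.ofHom p) := (ModuleCat.epi_iff_surjective _).2 hp
  ProjectiveResolution.ofPresentation (ModuleCat.ofHom g) (ModuleCat.ofHom p)
    (ModuleCat.hom_ext (LinearMap.range_le_ker_iff.1 hgp.le))
    ((ShortComplex.moduleCat_exact_iff_range_eq_ker _).2 hgp)

theorem exists_comp_subtype_range_eq_of_extVanish_one (hp : Function.Surjective p)
    (hgp : LinearMap.range g = LinearMap.ker p) (hext : extVanish R M N 1)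
    (φ : LinearMap.range g →ₗ[R] N) : ∃ η : P₀ →ₗ[R] N, η ∘ₗ (LinearMap.range g).subtype = φ :=
  (ModuleCat.projectiveResolutionOfPresentation hp hgp).exists_comp_subtype_eq_of_isZero_ext 0
    hext.isZero rfl φ

theorem exists_comp_subtype_ker_eq_of_extVanish_two (hp : Function.Surjective p)
    (hgp : LinearMap.range g = LinearMap.ker p) (hext : extVanish R M N 2)
    (φ : LinearMap.ker g →ₗ[R] N) : ∃ η : P₁ →ₗ[R] N, η ∘ₗ (LinearMap.ker g).subtype = φ := by
  let Q := ModuleCat.projectiveResolutionOfPresentation hp hgp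
  have hS : LinearMap.range (Q.complex.d 2 1).hom = LinearMap.ker g :=
    (ShortComplex.moduleCat_exact_iff_range_eq_ker _).1 (Q.exact_succ 0)
  exact Q.exists_comp_subtype_eq_of_isZero_ext 1 hext.isZero hS φ

end Presentation

section DualSequence

variable {R : Type} [Ring R] {P₀ P₁ : Type} [AddCommGroup P₀] [Module R P₀]
  [AddCommGroup P₁] [Module R P₁] (g : P₁ →ₗ[R] P₀)

theorem ker_dualMapOp_subtype_ker
    (hext : ∀ φ : LinearMap.range g →ₗ[R] R, ∃ η : P₀ →ₗ[R] R,
      η ∘ₗ (LinearMap.range g).subtype = φ) :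
    LinearMap.ker (dualMapOp R (LinearMap.ker g).subtype) = LinearMap.range (dualMapOp R g) := by
  ext ψ
  constructor
  · intro hψ
    have hle : LinearMap.ker g ≤ LinearMap.ker ψ := fun x hx => congr($hψ ⟨x, hx⟩)
    obtain ⟨η, hη⟩ := hext ((LinearMap.ker g).liftQ ψ hle ∘ₗ g.quotKerEquivRange.symm.toLinearMap)
    refine ⟨η, LinearMap.ext fun x => ?_⟩
    have hx := congr($hη ⟨g x, LinearMap.mem_range_self g x⟩)
    show η (g x) = ψ x
    simpa [LinearMap.quotKerEquivRange_symm_apply_image] using hx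
  · rintro ⟨η, rfl⟩
    ext ⟨x, hx⟩
    exact congr(η $hx).trans η.map_zero

def cokernelDualMapOpEquivDualKer
    (hext₀ : ∀ φ : LinearMap.range g →ₗ[R] R, ∃ η : P₀ →ₗ[R] R,
      η ∘ₗ (LinearMap.range g).subtype = φ)
    (hext₁ : ∀ φ : LinearMap.ker g →ₗ[R] R, ∃ η : P₁ →ₗ[R] R,
      η ∘ₗ (LinearMap.ker g).subtype = φ) :
    ((P₁ →ₗ[R] R) ⧸ LinearMap.range (dualMapOp R g)) ≃ₗ[Rᵐᵒᵖ] (LinearMap.ker g →ₗ[R] R) :=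
  (Submodule.quotEquivOfEq _ _ (ker_dualMapOp_subtype_ker g hext₀).symm).trans
    ((dualMapOp R (LinearMap.ker g).subtype).quotKerEquivOfSurjective hext₁)

end DualSequence

section ProjCover

variable {R : Type} [Ring R] {P Q M M' K : Type} [AddCommGroup P] [Module R P]
  [AddCommGroup Q] [Module R Q] [AddCommGroup M] [Module R M] [AddCommGroup M'] [Module R M']
  [AddCommGroup K] [Module R K]

theorem surjective_of_comp_eq_of_superfluous_ker {f : P →ₗ[R] M} {f' : Q →ₗ[R] M}
    (hf : Function.Surjective f) (hf' : ∀ N : Submodule R Q, N ⊔ LinearMap.ker f' = ⊤ → N = ⊤)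
    {h : P →ₗ[R] Q} (hh : f' ∘ₗ h = f) : Function.Surjective h := by
  refine LinearMap.range_eq_top.1 (hf' _ (eq_top_iff.2 fun q _ => ?_))
  obtain ⟨x, hx⟩ := hf (f' q)
  have hker : q - h x ∈ LinearMap.ker f' := by
    rw [LinearMap.mem_ker, map_sub, ← LinearMap.comp_apply, hh, hx, sub_self]
  simpa using Submodule.add_mem_sup (LinearMap.mem_range_self h x) hker

theorem IsProjCover.exists_bijective_comp_eq {f : P →ₗ[R] M} {f' : Q →ₗ[R] M}
    (hf : IsProjCover R f) (hf' : IsProjCover R f') :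
    ∃ h : P →ₗ[R] Q, f' ∘ₗ h = f ∧ Function.Bijective h := by
  obtain ⟨hP, hfs, hfsup⟩ := hf
  obtain ⟨hQ, hf's, hf'sup⟩ := hf'
  obtain ⟨h, hh⟩ := Module.projective_lifting_property f' f hf's
  have hhs := surjective_of_comp_eq_of_superfluous_ker hfs hf'sup hh
  obtain ⟨s, hs⟩ := Module.projective_lifting_property h LinearMap.id hhs
  have hss : Function.Surjective s := surjective_of_comp_eq_of_superfluous_ker hf's hfsup (by
    rw [← hh, LinearMap.comp_assoc, hs, LinearMap.comp_id])
  refine ⟨h, hh, fun a b hab => ?_, hhs⟩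
  obtain ⟨a, rfl⟩ := hss a
  obtain ⟨b, rfl⟩ := hss b
  simp only [← LinearMap.comp_apply, hs, LinearMap.id_apply] at hab ⊢
  rw [hab]

theorem IsProjCover.nonempty_kerEquiv {f : P →ₗ[R] M} {f' : Q →ₗ[R] M}
    (hf : IsProjCover R f) (hf' : IsProjCover R f') :
    Nonempty (LinearMap.ker f ≃ₗ[R] LinearMap.ker f') := by
  obtain ⟨h, hh, hbij⟩ := hf.exists_bijective_comp_eq hf'
  let e := LinearEquiv.ofBijective h hbij
  exact ⟨(LinearEquiv.ofEq _ _ (by rw [← hh, LinearMap.ker_comp]; rfl)).trans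
    (e.ofSubmodule' (LinearMap.ker f'))⟩

theorem isProjCover_rangeRestrict [Module.Projective R P] {g : P →ₗ[R] M}
    (hg : ∀ N : Submodule R P, N ⊔ LinearMap.ker g = ⊤ → N = ⊤) :
    IsProjCover R g.rangeRestrict :=
  ⟨‹_›, g.surjective_rangeRestrict, by rwa [LinearMap.ker_rangeRestrict]⟩

theorem IsSyzygyOf.nonempty_equiv_ker {f : P →ₗ[R] M} (hK : IsSyzygyOf R K M)
    (hf : IsProjCover R f) : Nonempty (K ≃ₗ[R] LinearMap.ker f) := by
  obtain ⟨P', _, _, f', hf', ⟨e⟩⟩ := hK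
  obtain ⟨e'⟩ := hf'.nonempty_kerEquiv hf
  exact ⟨e.trans e'⟩

theorem IsSyzygyOf.of_equiv (hK : IsSyzygyOf R K M) (e : M ≃ₗ[R] M') : IsSyzygyOf R K M' := by
  obtain ⟨P, _, _, f, ⟨hP, hfs, hfsup⟩, ⟨eK⟩⟩ := hK
  refine ⟨P, _, _, e.toLinearMap ∘ₗ f, ⟨hP, e.surjective.comp hfs, ?_⟩, ⟨?_⟩⟩
  · rwa [LinearEquiv.ker_comp]
  · exact eK.trans (LinearEquiv.ofEq _ _ (LinearEquiv.ker_comp e f).symm)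

end ProjCover

theorem transpose_iso_dual_secondSyzygy_general (Λ : Type) [Ring Λ]
    (M : Type) [AddCommGroup M] [Module Λ M] (hGP : GProj Λ M)
    (T : Type) [AddCommGroup T] [Module Λᵐᵒᵖ T] (hT : IsTransposeOf Λ T M)
    (K : Type) [AddCommGroup K] [Module Λ K] (hK : IsNthSyzygyOf Λ 2 K M) :
    Nonempty (T ≃ₗ[Λᵐᵒᵖ] (K →ₗ[Λ] Λ)) := by
  obtain ⟨P₁, P₀, _, _, _, _, g, f, hf, _, hgf, hg, ⟨eT⟩⟩ := hT
  obtain ⟨K₁, _, _, hK₁, K₂, _, _, hK₂, ⟨eK⟩⟩ := hK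
  have : Module.Projective Λ P₀ := hf.1
  obtain ⟨e₁⟩ := hK₁.nonempty_equiv_ker hf
  obtain ⟨e₂⟩ := (hK₂.of_equiv (e₁.trans (LinearEquiv.ofEq _ _ hgf.symm))).nonempty_equiv_ker
    (isProjCover_rangeRestrict hg)
  let eΩ : K ≃ₗ[Λ] LinearMap.ker g :=
    eK.trans (e₂.trans (LinearEquiv.ofEq _ _ (LinearMap.ker_rangeRestrict g)))
  exact ⟨eT.trans ((cokernelDualMapOpEquivDualKer g
    (exists_comp_subtype_range_eq_of_extVanish_one hf.2.1 hgf (hGP.1 1 le_rfl))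
    (exists_comp_subtype_ker_eq_of_extVanish_two hf.2.1 hgf (hGP.1 2 one_le_two))).trans
    (LinearEquiv.congrLeft Λ Λᵐᵒᵖ eΩ.symm))⟩

/-- For a f.g. Gorenstein projective module `M`, the Auslander transpose `Tr M` is
isomorphic to `(Ω² M)^* = Hom_Λ(Ω² M, Λ)`. -/
theorem transpose_iso_dual_secondSyzygy (Λ : Type) [Ring Λ] [IsArtinianRing Λ]
    (M : Type) [AddCommGroup M] [Module Λ M] (hfg : Module.Finite Λ M) (hGP : GProj Λ M)
    (T : Type) [AddCommGroup T] [Module Λᵐᵒᵖ T] (hT : IsTransposeOf Λ T M)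
    (K : Type) [AddCommGroup K] [Module Λ K] (hK : IsNthSyzygyOf Λ 2 K M) :
    Nonempty (T ≃ₗ[Λᵐᵒᵖ] (K →ₗ[Λ] Λ)) :=
  transpose_iso_dual_secondSyzygy_general Λ M hGP T hT K hK

end
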